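/- arXiv:1503.00605 — 2 statements merged into one kernel-verified Lean document; each statement's English description precedes it below -/
import Mathlib

section
/- If a triangulation of the 2-sphere has exactly two vertices of odd degree, then these two vertices are not adjacent. -/
/-!
Combinatorial triangulated surfaces.

A triangulation is encoded by its finset of faces (each a 3-element finset of
vertices).  `IsClosedSurface` says: nonempty, every face a triangle, every edge
in exactly two faces, and the faces around each vertex are connected through
edges containing that vertex (so the link of every vertex is a single cycle).
A connected closed surface with Euler characteristic 2 is a sphere, with
Euler characteristic 1 is the projective plane, and an orientable one with
Euler characteristic 0 is the torus.  Surfaces with boundary allow edges lying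
in exactly one face; a connected such surface is simply connected iff it is a
disk (Euler characteristic 1, with boundary) or a sphere (Euler characteristic 2).
The degree of a vertex is the number of edges containing it.
-/

namespace Fisk

variable {V : Type*} [DecidableEq V]

/-- The edges of a triangulation: the 2-element subsets of its faces. -/
def edges (F : Finset (Finset V)) : Finset (Finset V) :=
  F.biUnion (fun f => f.powersetCard 2)

/-- The vertex set of a triangulation. -/
def vertices (F : Finset (Finset V)) : Finset V := F.sup id

/-- The degree of a vertex: the number of edges containing it. -/
def degree (F : Finset (Finset V)) (v : V) : ℕ :=
  ((edges F).filter (fun e => v ∈ e)).card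

/-- Two vertices are adjacent if they span an edge. -/
def IsAdjacent (F : Finset (Finset V)) (a b : V) : Prop :=
  a ≠ b ∧ ({a, b} : Finset V) ∈ edges F

/-- The faces are connected under the relation "share an edge". -/
def FacesConnected (F : Finset (Finset V)) : Prop :=
  ∀ f ∈ F, ∀ g ∈ F,
    Relation.ReflTransGen (fun x y => x ∈ F ∧ y ∈ F ∧ (x ∩ y).card = 2) f g

/-- Around every vertex, the faces containing it are connected through
edges containing it (links are connected). -/
def LinkConnected (F : Finset (Finset V)) : Prop :=
  ∀ v : V, ∀ f ∈ F, ∀ g ∈ F, v ∈ f → v ∈ g →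
    Relation.ReflTransGen
      (fun x y => x ∈ F ∧ y ∈ F ∧ v ∈ x ∧ v ∈ y ∧ (x ∩ y).card = 2) f g

/-- A triangulation of a closed surface. -/
def IsClosedSurface (F : Finset (Finset V)) : Prop :=
  F.Nonempty ∧ (∀ f ∈ F, f.card = 3) ∧
  (∀ e ∈ edges F, (F.filter (fun f => e ⊆ f)).card = 2) ∧
  LinkConnected F

/-- The Euler characteristic `#V - #E + #F`. -/
def eulerChar (F : Finset (Finset V)) : ℤ :=
  ((vertices F).card : ℤ) - ((edges F).card : ℤ) + (F.card : ℤ)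

/-- A triangulation of the 2-sphere: a connected closed surface with
Euler characteristic 2. -/
def IsSphere (F : Finset (Finset V)) : Prop :=
  IsClosedSurface F ∧ FacesConnected F ∧ eulerChar F = 2

/-- The oriented edges of an ordered triple. -/
def orientedEdges (t : V × V × V) : Finset (V × V) :=
  {(t.1, t.2.1), (t.2.1, t.2.2), (t.2.2, t.1)}

/-- Orientability: each face can be given a cyclic order of its vertices so
that no directed edge is induced by two different faces (i.e. adjacent faces
induce opposite orientations on their common edge). -/
def Orientable (F : Finset (Finset V)) : Prop :=
  ∃ o : Finset V → V × V × V,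
    (∀ f ∈ F, ({(o f).1, (o f).2.1, (o f).2.2} : Finset V) = f) ∧
    (∀ f ∈ F, ∀ g ∈ F, f ≠ g → ∀ p ∈ orientedEdges (o f), p ∉ orientedEdges (o g))

/-- A triangulation of the torus: a connected orientable closed surface with
Euler characteristic 0. -/
def IsTorus (F : Finset (Finset V)) : Prop :=
  IsClosedSurface F ∧ FacesConnected F ∧ Orientable F ∧ eulerChar F = 0

/-- A triangulation of the projective plane: a connected closed surface with
Euler characteristic 1. -/
def IsProjectivePlane (F : Finset (Finset V)) : Prop :=
  IsClosedSurface F ∧ FacesConnected F ∧ eulerChar F = 1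

/-- A triangulation of a surface, possibly with boundary: every edge lies in
one or two faces. -/
def IsSurfaceWithBoundary (F : Finset (Finset V)) : Prop :=
  F.Nonempty ∧ (∀ f ∈ F, f.card = 3) ∧
  (∀ e ∈ edges F,
    (F.filter (fun f => e ⊆ f)).card = 1 ∨ (F.filter (fun f => e ⊆ f)).card = 2) ∧
  LinkConnected F

/-- The boundary edges: edges lying in exactly one face. -/
def boundaryEdges (F : Finset (Finset V)) : Finset (Finset V) :=
  (edges F).filter (fun e => (F.filter (fun f => e ⊆ f)).card = 1)

/-- The boundary vertices: vertices of boundary edges. -/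
def boundaryVertices (F : Finset (Finset V)) : Finset V :=
  (boundaryEdges F).sup id

/-- A compact connected surface (possibly with boundary) is simply connected
iff it is a sphere (χ = 2) or a disk (χ = 1, nonempty boundary). -/
def IsSimplyConnectedSurface (F : Finset (Finset V)) : Prop :=
  IsSurfaceWithBoundary F ∧ FacesConnected F ∧
    (eulerChar F = 2 ∨ (eulerChar F = 1 ∧ (boundaryEdges F).Nonempty))

/-- A triangulation of a disk (= of a polygon, the corners being the boundary
vertices): a connected surface with nonempty boundary and Euler characteristic 1. -/
def IsDisk (F : Finset (Finset V)) : Prop :=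
  IsSurfaceWithBoundary F ∧ FacesConnected F ∧ eulerChar F = 1 ∧
    (boundaryEdges F).Nonempty

/-- A proper vertex coloring: the two endpoints of every edge get distinct
colors (for a triangulation: every triangle receives all three colors). -/
def ProperColoring {C : Type*} (F : Finset (Finset V)) (c : V → C) : Prop :=
  ∀ e ∈ edges F, ∀ u ∈ e, ∀ w ∈ e, u ≠ w → c u ≠ c w

end Fisk

/-!
Work with chains over `ZMod 2`. If `a` and `b` are the only odd vertices and `ab` is an edge,
then the 1-chain of all edges other than `ab` is a cycle: every vertex meets an even number of
them. On a sphere every mod-2 1-cycle is a boundary. Here this comes from a dimension count: by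
connectedness the boundary maps from faces to edges and from edges to vertices have ranks
`#F - 1` and `#V - 1`, and `#V - #E + #F = 2` makes the boundaries fill the cycle space.
So there is a set `B` of faces such that every edge other than `ab` lies in exactly one face
of `B`, and `ab` lies in none or two. Counting incidences between edges and faces of `B` gives
`3 * #B = #E - 1` or `#E + 1`, while `3 * #F = 2 * #E` makes `#E` divisible by 3.
-/

open Finset Module
open scoped Matrix

theorem Relation.ReflTransGen.apply_eq {α β : Type*} {r : α → α → Prop} {g : α → β}
    (h : ∀ a b, r a b → g a = g b) {a b : α} (hab : Relation.ReflTransGen r a b) : g a = g b := by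
  induction hab with
  | refl => rfl
  | tail _ hbc ih => exact ih.trans (h _ _ hbc)

theorem ZMod.sum_two_eq_card_filter {ι : Type*} (s : Finset ι) (x : ι → ZMod 2) :
    ∑ i ∈ s, x i = #{i ∈ s | x i = 1} := by
  have h01 : ∀ i, x i = if x i = 1 then 1 else 0 := fun i => by
    generalize x i = t; revert t; decide
  rw [sum_congr rfl fun i _ => h01 i, sum_boole]

theorem Matrix.rank_add_one_eq_card {K m n : Type*} [Field K] [Fintype n] [Nonempty n]
    (M : Matrix m n K) (h1 : M *ᵥ 1 = 0) (hconst : ∀ x, M *ᵥ x = 0 → ∀ i j, x i = x j) :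
    M.rank + 1 = Fintype.card n := by
  have hker : LinearMap.ker M.mulVecLin = K ∙ 1 := by
    refine le_antisymm (fun x hx => ?_) ((Submodule.span_singleton_le_iff_mem _ _).2 h1)
    obtain ⟨i⟩ := ‹Nonempty n›
    refine Submodule.mem_span_singleton.2 ⟨x i, funext fun j => ?_⟩
    simpa using hconst x hx i j
  have h := LinearMap.finrank_range_add_finrank_ker M.mulVecLin
  rwa [hker, finrank_span_singleton one_ne_zero, finrank_fintype_fun_eq_card] at h

theorem Finset.sum_coe_sort_extend {α R M : Type*} [Zero R] [AddCommMonoid M] (s : Finset α)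
    (x : ↥s → R) (g : α → R → M) :
    ∑ i : ↥s, g i (x i) = ∑ i ∈ s, g i (Function.extend Subtype.val x 0 i) := by
  rw [← sum_coe_sort s]
  exact sum_congr rfl fun i _ => by rw [Subtype.val_injective.extend_apply]

namespace Fisk

variable {V : Type*} [DecidableEq V] {F : Finset (Finset V)}

theorem card_eq_two_of_mem_edges {e : Finset V} (he : e ∈ edges F) : e.card = 2 := by
  obtain ⟨f, -, hef⟩ := mem_biUnion.1 he
  exact (mem_powersetCard.1 hef).2

theorem mem_edges_of_subset {e f : Finset V} (hf : f ∈ F) (hef : e ⊆ f) (he : e.card = 2) :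
    e ∈ edges F :=
  mem_biUnion.2 ⟨f, hf, mem_powersetCard.2 ⟨hef, he⟩⟩

theorem mem_vertices {v : V} : v ∈ vertices F ↔ ∃ f ∈ F, v ∈ f := by
  simp [vertices, mem_sup]

theorem mem_vertices_of_mem_edges {e : Finset V} {v : V} (he : e ∈ edges F) (hv : v ∈ e) :
    v ∈ vertices F := by
  obtain ⟨f, hf, hef⟩ := mem_biUnion.1 he
  exact mem_vertices.2 ⟨f, hf, (mem_powersetCard.1 hef).1 hv⟩

theorem filter_edges_subset {f : Finset V} (hf : f ∈ F) :
    {e ∈ edges F | e ⊆ f} = f.powersetCard 2 := by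
  ext e
  simp only [mem_filter, mem_powersetCard]
  exact ⟨fun ⟨he, hef⟩ => ⟨hef, card_eq_two_of_mem_edges he⟩,
    fun ⟨hef, he⟩ => ⟨mem_edges_of_subset hf hef he, hef⟩⟩

theorem card_filter_edges_subset {f : Finset V} (hf : f ∈ F) :
    #{e ∈ edges F | e ⊆ f} = f.card.choose 2 := by
  rw [filter_edges_subset hf, card_powersetCard]

theorem card_filter_edges_mem_subset {f : Finset V} {v : V} (hf : f ∈ F) (hv : v ∈ f) :
    #{e ∈ edges F | e ⊆ f ∧ v ∈ e} = f.card - 1 := by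
  have := card_filter_powersetCard_subset {v} f 2 (singleton_subset_iff.2 hv) (by simp)
  rw [← filter_edges_subset hf, filter_filter, card_singleton, Nat.choose_one_right] at this
  simpa only [singleton_subset_iff] using this

theorem eq_of_facesConnected {β : Type*} {g : V → β} (hconn : FacesConnected F)
    (hg : ∀ u w : V, ({u, w} : Finset V) ∈ edges F → g u = g w) {u w : V}
    (hu : u ∈ vertices F) (hw : w ∈ vertices F) : g u = g w := by
  have hface : ∀ f ∈ F, ∀ u ∈ f, ∀ w ∈ f, g u = g w := by
    intro f hf u hu w hw
    obtain rfl | huw := eq_or_ne u w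
    · rfl
    exact hg u w (mem_edges_of_subset hf (insert_subset hu (singleton_subset_iff.2 hw))
      (card_pair huw))
  obtain ⟨f, hf, huf⟩ := mem_vertices.1 hu
  obtain ⟨f', hf', hwf'⟩ := mem_vertices.1 hw
  suffices ∀ q, Relation.ReflTransGen (fun x y => x ∈ F ∧ y ∈ F ∧ (x ∩ y).card = 2) f q →
      ∀ w ∈ q, g u = g w from this f' (hconn f hf f' hf') w hwf'
  intro q hq
  induction hq with
  | refl => exact hface f hf u huf
  | tail _ hpq ih =>
    obtain ⟨z, hz⟩ := card_pos.1 (hpq.2.2 ▸ two_pos)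
    exact fun w hw => (ih z (mem_inter.1 hz).1).trans (hface _ hpq.2.1 z (mem_inter.1 hz).2 w hw)

/- Chains with coefficients in `ZMod 2` are functions on the faces, edges and vertices; the
boundary maps are the incidence matrices. -/
variable (F) in
def faceBoundary : Matrix ↥(edges F) ↥F (ZMod 2) :=
  .of fun e f => if (e : Finset V) ⊆ f then 1 else 0

variable (F) in
def edgeBoundary : Matrix ↥(vertices F) ↥(edges F) (ZMod 2) :=
  .of fun v e => if (v : V) ∈ (e : Finset V) then 1 else 0

theorem faceBoundary_mulVec_apply (x : ↥F → ZMod 2) (e : ↥(edges F)) :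
    (faceBoundary F *ᵥ x) e =
      ∑ f ∈ F with (e : Finset V) ⊆ f, Function.extend Subtype.val x 0 f := by
  simp only [Matrix.mulVec, dotProduct, faceBoundary, Matrix.of_apply, ite_mul, one_mul, zero_mul]
  rw [sum_filter]
  exact sum_coe_sort_extend F x fun f r => if (e : Finset V) ⊆ f then r else 0

theorem edgeBoundary_transpose_mulVec_apply (S : ↥(vertices F) → ZMod 2) (e : ↥(edges F)) :
    ((edgeBoundary F)ᵀ *ᵥ S) e = ∑ v ∈ (e : Finset V), Function.extend Subtype.val S 0 v := by
  simp only [Matrix.mulVec, dotProduct, Matrix.transpose_apply, edgeBoundary, Matrix.of_apply,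
    ite_mul, one_mul, zero_mul]
  rw [sum_coe_sort_extend (vertices F) S fun v r => if v ∈ (e : Finset V) then r else 0,
    ← sum_filter, filter_mem_eq_inter,
    inter_eq_right.2 fun v hv => mem_vertices_of_mem_edges e.2 hv]

theorem edgeBoundary_mul_faceBoundary (hcard : ∀ f ∈ F, f.card = 3) :
    edgeBoundary F * faceBoundary F = 0 := by
  ext v f
  simp only [Matrix.mul_apply, edgeBoundary, faceBoundary, Matrix.of_apply, mul_ite, mul_one,
    mul_zero, ← ite_and, Matrix.zero_apply]
  rw [sum_coe_sort (edges F) fun e => if e ⊆ (f : Finset V) ∧ (v : V) ∈ e then (1 : ZMod 2)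
    else 0, sum_boole]
  by_cases hv : (v : V) ∈ (f : Finset V)
  · rw [card_filter_edges_mem_subset f.2 hv, hcard f f.2]
    rfl
  · rw [filter_false_of_mem fun e _ h => hv (h.1 h.2), card_empty, Nat.cast_zero]

theorem faceBoundary_mulVec_one (htwo : ∀ e ∈ edges F, #{f ∈ F | e ⊆ f} = 2) :
    faceBoundary F *ᵥ 1 = 0 := by
  ext e
  simp only [Matrix.mulVec, dotProduct, Pi.one_apply, mul_one, faceBoundary, Matrix.of_apply,
    Pi.zero_apply]
  rw [sum_coe_sort F fun f => if (e : Finset V) ⊆ f then (1 : ZMod 2) else 0, sum_boole,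
    htwo e e.2]
  rfl

theorem edgeBoundary_transpose_mulVec_one : (edgeBoundary F)ᵀ *ᵥ 1 = 0 := by
  ext e
  simp only [Matrix.mulVec, dotProduct, Pi.one_apply, mul_one, edgeBoundary,
    Matrix.transpose_apply, Matrix.of_apply, Pi.zero_apply]
  rw [sum_coe_sort (vertices F) fun v => if v ∈ (e : Finset V) then (1 : ZMod 2) else 0,
    sum_boole, filter_mem_eq_inter, inter_eq_right.2 fun v hv => mem_vertices_of_mem_edges e.2 hv,
    card_eq_two_of_mem_edges e.2]
  rfl

theorem edgeBoundary_mulVec_one (v : ↥(vertices F)) :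
    (edgeBoundary F *ᵥ 1) v = degree F v := by
  simp only [Matrix.mulVec, dotProduct, Pi.one_apply, mul_one, edgeBoundary, Matrix.of_apply]
  rw [sum_coe_sort (edges F) fun e => if (v : V) ∈ e then (1 : ZMod 2) else 0, sum_boole, degree]

theorem apply_eq_of_faceBoundary_mulVec_eq_zero (hcard : ∀ f ∈ F, f.card = 3)
    (htwo : ∀ e ∈ edges F, #{f ∈ F | e ⊆ f} = 2) (hconn : FacesConnected F)
    {x : ↥F → ZMod 2} (hx : faceBoundary F *ᵥ x = 0) (f g : ↥F) : x f = x g := by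
  set y := Function.extend Subtype.val x 0
  have hadj : ∀ p q, (p ∈ F ∧ q ∈ F ∧ (p ∩ q).card = 2) → y p = y q := by
    rintro p q ⟨hp, hq, hpq⟩
    have hne : p ≠ q := by
      rintro rfl
      simp [hcard p hp] at hpq
    have he : p ∩ q ∈ edges F := mem_edges_of_subset hp inter_subset_left hpq
    have hfaces : {f ∈ F | p ∩ q ⊆ f} = {p, q} :=
      (eq_of_subset_of_card_le
        (by simp [insert_subset_iff, hp, hq, inter_subset_left, inter_subset_right])
        (by rw [htwo _ he, card_pair hne])).symm
    have := congr_fun hx ⟨p ∩ q, he⟩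
    rwa [faceBoundary_mulVec_apply, hfaces, sum_pair hne, Pi.zero_apply,
      CharTwo.add_eq_zero] at this
  simpa only [y, Subtype.val_injective.extend_apply] using (hconn f f.2 g g.2).apply_eq hadj

theorem apply_eq_of_edgeBoundary_transpose_mulVec_eq_zero (hconn : FacesConnected F)
    {S : ↥(vertices F) → ZMod 2} (hS : (edgeBoundary F)ᵀ *ᵥ S = 0) (u w : ↥(vertices F)) :
    S u = S w := by
  set T := Function.extend Subtype.val S 0
  have hedge : ∀ u w : V, ({u, w} : Finset V) ∈ edges F → T u = T w := by
    intro u w he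
    obtain rfl | hne := eq_or_ne u w
    · rfl
    have := congr_fun hS ⟨_, he⟩
    rwa [edgeBoundary_transpose_mulVec_apply, sum_pair hne, Pi.zero_apply,
      CharTwo.add_eq_zero] at this
  simpa only [T, Subtype.val_injective.extend_apply] using
    eq_of_facesConnected hconn hedge u.2 w.2

theorem rank_faceBoundary_add_one (hne : F.Nonempty) (hcard : ∀ f ∈ F, f.card = 3)
    (htwo : ∀ e ∈ edges F, #{f ∈ F | e ⊆ f} = 2) (hconn : FacesConnected F) :
    (faceBoundary F).rank + 1 = F.card := by
  have : Nonempty ↥F := hne.to_subtype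
  simpa using (faceBoundary F).rank_add_one_eq_card (faceBoundary_mulVec_one htwo)
    fun x hx => apply_eq_of_faceBoundary_mulVec_eq_zero hcard htwo hconn hx

theorem rank_edgeBoundary_add_one (hne : (vertices F).Nonempty) (hconn : FacesConnected F) :
    (edgeBoundary F).rank + 1 = (vertices F).card := by
  have : Nonempty ↥(vertices F) := hne.to_subtype
  simpa [Matrix.rank_transpose] using (edgeBoundary F)ᵀ.rank_add_one_eq_card
    edgeBoundary_transpose_mulVec_one
    fun S hS => apply_eq_of_edgeBoundary_transpose_mulVec_eq_zero hconn hS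

theorem ker_edgeBoundary_eq_range_faceBoundary (hne : F.Nonempty) (hcard : ∀ f ∈ F, f.card = 3)
    (htwo : ∀ e ∈ edges F, #{f ∈ F | e ⊆ f} = 2) (hconn : FacesConnected F)
    (hχ : eulerChar F = 2) :
    LinearMap.ker (edgeBoundary F).mulVecLin = LinearMap.range (faceBoundary F).mulVecLin := by
  have hV : (vertices F).Nonempty := by
    obtain ⟨f, hf⟩ := hne
    obtain ⟨v, hv⟩ := card_pos.1 ((hcard f hf).symm ▸ three_pos : 0 < f.card)
    exact ⟨v, mem_vertices.2 ⟨f, hf, hv⟩⟩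
  have hle : LinearMap.range (faceBoundary F).mulVecLin ≤
      LinearMap.ker (edgeBoundary F).mulVecLin := by
    rintro _ ⟨x, rfl⟩
    simp [Matrix.mulVec_mulVec, edgeBoundary_mul_faceBoundary hcard]
  refine (Submodule.eq_of_le_of_finrank_le hle ?_).symm
  have hnullity := LinearMap.finrank_range_add_finrank_ker (edgeBoundary F).mulVecLin
  have h₂ := rank_faceBoundary_add_one hne hcard htwo hconn
  have h₁ := rank_edgeBoundary_add_one hV hconn
  rw [finrank_fintype_fun_eq_card, Fintype.card_coe] at hnullity
  unfold eulerChar at hχ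
  unfold Matrix.rank at h₁ h₂
  omega

theorem edgeBoundary_mulVec_one_sub_single (e : ↥(edges F))
    (h : ∀ v ∈ vertices F, Odd (degree F v) ↔ v ∈ (e : Finset V)) :
    edgeBoundary F *ᵥ (1 - Pi.single e 1) = 0 := by
  ext v
  rw [Matrix.mulVec_sub, Matrix.mulVec_single_one, Pi.sub_apply, edgeBoundary_mulVec_one,
    Pi.zero_apply]
  simp only [Matrix.col_apply, edgeBoundary, Matrix.of_apply]
  by_cases hv : (v : V) ∈ (e : Finset V)
  · rw [if_pos hv, ZMod.natCast_eq_one_iff_odd.2 ((h v v.2).2 hv), sub_self]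
  · rw [if_neg hv, ZMod.natCast_eq_zero_iff_even.2 (Nat.not_odd_iff_even.1 (mt (h v v.2).1 hv)),
      sub_zero]

theorem sum_card_filter_subset (hcard : ∀ f ∈ F, f.card = 3) {B : Finset (Finset V)}
    (hB : B ⊆ F) : ∑ e ∈ edges F, #{f ∈ B | e ⊆ f} = 3 * #B := by
  have := sum_card_bipartiteAbove_eq_sum_card_bipartiteBelow (· ⊆ ·) (s := edges F) (t := B)
  simp only [bipartiteAbove, bipartiteBelow] at this
  rw [this, sum_congr rfl fun f hf => by rw [card_filter_edges_subset (hB hf), hcard f (hB hf)],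
    sum_const, smul_eq_mul, mul_comm]
  rfl

theorem faceBoundary_mulVec_apply_eq_card (x : ↥F → ZMod 2) (e : ↥(edges F)) :
    (faceBoundary F *ᵥ x) e =
      #{f ∈ {f ∈ F | Function.extend Subtype.val x 0 f = 1} | (e : Finset V) ⊆ f} := by
  rw [faceBoundary_mulVec_apply, ZMod.sum_two_eq_card_filter, filter_filter, filter_filter]
  simp only [and_comm]

theorem faceBoundary_mulVec_ne_one_sub_single (hcard : ∀ f ∈ F, f.card = 3)
    (htwo : ∀ e ∈ edges F, #{f ∈ F | e ⊆ f} = 2) (e₀ : ↥(edges F)) (x : ↥F → ZMod 2) :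
    faceBoundary F *ᵥ x ≠ 1 - Pi.single e₀ 1 := by
  intro hx
  set B := {f ∈ F | Function.extend Subtype.val x 0 f = 1}
  have hparity : ∀ e (he : e ∈ edges F),
      (#{f ∈ B | e ⊆ f} : ZMod 2) = if e = e₀ then 0 else 1 := by
    intro e he
    rw [← faceBoundary_mulVec_apply_eq_card x ⟨e, he⟩, hx]
    simp only [Pi.sub_apply, Pi.one_apply, Pi.single_apply, Subtype.ext_iff]
    split_ifs <;> simp
  have hle : ∀ e ∈ edges F, #{f ∈ B | e ⊆ f} ≤ 2 := fun e he =>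
    htwo e he ▸ card_le_card (filter_subset_filter _ (filter_subset _ _))
  have hone : ∀ e ∈ (edges F).erase e₀, #{f ∈ B | e ⊆ f} = 1 := by
    intro e he
    obtain ⟨hne, he⟩ := mem_erase.1 he
    have := Nat.odd_iff.1 (ZMod.natCast_eq_one_iff_odd.1 ((hparity e he).trans (if_neg hne)))
    have := hle e he
    omega
  have he₀ : #{f ∈ B | (e₀ : Finset V) ⊆ f} = 0 ∨ #{f ∈ B | (e₀ : Finset V) ⊆ f} = 2 := by
    have := Nat.even_iff.1 (ZMod.natCast_eq_zero_iff_even.1 ((hparity _ e₀.2).trans (if_pos rfl)))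
    have := hle _ e₀.2
    omega
  have hB : ∑ e ∈ edges F, #{f ∈ B | e ⊆ f} = 3 * #B :=
    sum_card_filter_subset hcard (filter_subset _ F)
  have hF := sum_card_filter_subset hcard (subset_refl F)
  rw [← add_sum_erase _ _ e₀.2, sum_congr rfl hone] at hB
  rw [sum_congr rfl htwo] at hF
  simp only [sum_const, card_erase_of_mem e₀.2, smul_eq_mul, mul_one] at hB hF
  have := card_pos.2 ⟨_, e₀.2⟩
  omega

end Fisk

open Fisk in
theorem fisk_two_odd_vertices_not_adjacent_general {V : Type*} [DecidableEq V]
    (F : Finset (Finset V)) (hF : IsSphere F) (a b : V)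
    (hoa : Odd (degree F a)) (hob : Odd (degree F b))
    (honly : ∀ v ∈ vertices F, Odd (degree F v) → v = a ∨ v = b) :
    ¬ IsAdjacent F a b := by
  rintro ⟨-, hab⟩
  obtain ⟨⟨hne, hcard, htwo, -⟩, hconn, hχ⟩ := hF
  set e₀ : ↥(edges F) := ⟨{a, b}, hab⟩
  have hodd : ∀ v ∈ vertices F, Odd (degree F v) ↔ v ∈ (e₀ : Finset V) := fun v hv => by
    simp only [e₀, mem_insert, mem_singleton]
    exact ⟨honly v hv, by rintro (rfl | rfl) <;> assumption⟩
  have hcycle : 1 - Pi.single e₀ 1 ∈ LinearMap.ker (edgeBoundary F).mulVecLin :=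
    edgeBoundary_mulVec_one_sub_single e₀ hodd
  rw [ker_edgeBoundary_eq_range_faceBoundary hne hcard htwo hconn hχ] at hcycle
  obtain ⟨x, hx⟩ := hcycle
  exact faceBoundary_mulVec_ne_one_sub_single hcard htwo e₀ x hx

open Fisk in
/-- **Fisk's theorem.** If a triangulation of the 2-sphere has exactly two
vertices of odd degree, then these vertices are not adjacent. -/
theorem fisk_two_odd_vertices_not_adjacent {V : Type*} [DecidableEq V]
    (F : Finset (Finset V)) (hF : IsSphere F) (a b : V)
    (ha : a ∈ vertices F) (hb : b ∈ vertices F) (hab : a ≠ b)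
    (hoa : Odd (degree F a)) (hob : Odd (degree F b))
    (honly : ∀ v ∈ vertices F, Odd (degree F v) → v = a ∨ v = b) :
    ¬ IsAdjacent F a b :=
  fisk_two_odd_vertices_not_adjacent_general F hF a b hoa hob honly
end

section
/- A properly vertex-3-colorable triangulation of a closed surface is properly face-2-colorable if and only if the underlying surface is orientable. -/
namespace FiskProof

open Fisk

variable {V : Type*} [DecidableEq V]

lemma fin3_cyc : ∀ a b d : Fin 3, a ≠ b → a ≠ d → b ≠ d →
    ((d = b + 1 ↔ b = a + 1) ∧ (a = d + 1 ↔ b = a + 1)) := by decide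

lemma fin3_opp : ∀ a b : Fin 3, a ≠ b → ((b = a + 1) ↔ ¬ (a = b + 1)) := by decide

lemma fin3_third : ∀ a b d : Fin 3, a ≠ b → a ≠ d → b ≠ d →
    ((d = a + 1) ↔ ¬ (b = a + 1)) := by decide

lemma pair_mem_edges {F : Finset (Finset V)} {f : Finset V} (hf : f ∈ F)
    {a b : V} (ha : a ∈ f) (hb : b ∈ f) (hab : a ≠ b) :
    ({a, b} : Finset V) ∈ edges F := by
  simp only [edges, Finset.mem_biUnion, Finset.mem_powersetCard]
  exact ⟨f, hf, by simp [Finset.insert_subset_iff, ha, hb], Finset.card_pair hab⟩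

lemma color_ne {F : Finset (Finset V)} {c : V → Fin 3} (hc : ProperColoring F c)
    {f : Finset V} (hf : f ∈ F) {a b : V} (ha : a ∈ f) (hb : b ∈ f) (hab : a ≠ b) :
    c a ≠ c b :=
  hc _ (pair_mem_edges hf ha hb hab) a (by simp) b (by simp) hab

lemma mem_oE {t : V × V × V} {a b : V} :
    (a, b) ∈ orientedEdges t ↔
      (a = t.1 ∧ b = t.2.1) ∨ (a = t.2.1 ∧ b = t.2.2) ∨ (a = t.2.2 ∧ b = t.1) := by
  simp [orientedEdges, Prod.ext_iff]

lemma coherent {c : V → Fin 3} {x y z a b : V}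
    (h12 : c x ≠ c y) (h13 : c x ≠ c z) (h23 : c y ≠ c z)
    (hp : (a, b) ∈ orientedEdges (x, y, z)) :
    (c b = c a + 1 ↔ c y = c x + 1) := by
  rcases mem_oE.1 hp with ⟨rfl, rfl⟩ | ⟨rfl, rfl⟩ | ⟨rfl, rfl⟩
  · exact Iff.rfl
  · exact (fin3_cyc _ _ _ h12 h13 h23).1
  · exact (fin3_cyc _ _ _ h12 h13 h23).2

lemma oE_mem {t : V × V × V} {a b : V} (hp : (a, b) ∈ orientedEdges t) :
    a ∈ ({t.1, t.2.1, t.2.2} : Finset V) ∧ b ∈ ({t.1, t.2.1, t.2.2} : Finset V) := by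
  rcases mem_oE.1 hp with ⟨rfl, rfl⟩ | ⟨rfl, rfl⟩ | ⟨rfl, rfl⟩ <;> simp

lemma oE_ne {t : V × V × V} {a b : V} (hp : (a, b) ∈ orientedEdges t)
    (h12 : t.1 ≠ t.2.1) (h13 : t.1 ≠ t.2.2) (h23 : t.2.1 ≠ t.2.2) : a ≠ b := by
  rcases mem_oE.1 hp with ⟨rfl, rfl⟩ | ⟨rfl, rfl⟩ | ⟨rfl, rfl⟩
  · exact h12
  · exact h23
  · exact h13.symm

lemma triple_distinct {x y z : V} (h : ({x, y, z} : Finset V).card = 3) :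
    x ≠ y ∧ x ≠ z ∧ y ≠ z := by
  refine ⟨?_, ?_, ?_⟩ <;> rintro rfl
  · have : ({x, x, z} : Finset V).card ≤ 2 := by
      simp only [Finset.insert_idem]
      exact (Finset.card_insert_le _ _).trans (by simp)
    omega
  · have : ({x, y, x} : Finset V).card ≤ 2 := by
      have : ({x, y, x} : Finset V) = {x, y} := by
        ext w; simp; tauto
      rw [this]
      exact (Finset.card_insert_le _ _).trans (by simp)
    omega
  · have : ({x, y, y} : Finset V).card ≤ 2 := by
      have h' : ({x, y, y} : Finset V) = {x, y} := by
        ext w; simp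
      rw [h']
      exact (Finset.card_insert_le _ _).trans (by simp)
    omega

lemma pair_in_oE {x y z a b : V} (ha : a ∈ ({x, y, z} : Finset V))
    (hb : b ∈ ({x, y, z} : Finset V)) (hab : a ≠ b) :
    (a, b) ∈ orientedEdges (x, y, z) ∨ (b, a) ∈ orientedEdges (x, y, z) := by
  simp only [Finset.mem_insert, Finset.mem_singleton] at ha hb
  rcases ha with rfl | rfl | rfl <;> rcases hb with rfl | rfl | rfl <;>
    simp_all [mem_oE] <;> tauto

lemma inter_card_two {f g : Finset V} (hf3 : f.card = 3) (hg3 : g.card = 3)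
    (hfg : f ≠ g) {a b : V} (ha : a ∈ f ∩ g) (hb : b ∈ f ∩ g) (hab : a ≠ b) :
    (f ∩ g).card = 2 := by
  have h2 : 2 ≤ (f ∩ g).card := by
    have hsub : ({a, b} : Finset V) ⊆ f ∩ g := by
      simp [Finset.insert_subset_iff, ha, hb]
    calc 2 = ({a, b} : Finset V).card := (Finset.card_pair hab).symm
      _ ≤ _ := Finset.card_le_card hsub
  have h3 : (f ∩ g).card ≤ 3 := hf3 ▸ Finset.card_le_card Finset.inter_subset_left
  rcases Nat.lt_or_ge (f ∩ g).card 3 with h | h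
  · omega
  · exfalso
    have heq : f ∩ g = f :=
      Finset.eq_of_subset_of_card_le (Finset.inter_subset_left : f ∩ g ⊆ f) (by omega)
    have hsub : f ⊆ g := heq ▸ Finset.inter_subset_right
    exact hfg (Finset.eq_of_subset_of_card_le hsub (by omega))

end FiskProof

set_option maxHeartbeats 1000000

open Fisk in
/-- A properly vertex-3-colorable triangulation of a closed surface is
properly face-2-colorable if and only if the surface is orientable. -/
theorem vertex_colorable_face_colorable_iff_orientable
    {V : Type*} [DecidableEq V]
    (F : Finset (Finset V)) (hF : IsClosedSurface F) (hconn : FacesConnected F)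
    (hcol : ∃ c : V → Fin 3, ProperColoring F c) :
    (∃ fc : Finset V → Bool,
        ∀ f ∈ F, ∀ g ∈ F, f ≠ g → (f ∩ g).card = 2 → fc f ≠ fc g)
      ↔ Orientable F := by
  obtain ⟨c, hc⟩ := hcol
  obtain ⟨hFne, hF3, hEdge2, hLink⟩ := hF
  constructor
  · rintro ⟨fc, hfc⟩
    obtain ⟨f0, hf0⟩ := hFne
    obtain ⟨v0, _⟩ : (f0 : Finset V).Nonempty :=
      Finset.card_pos.1 (by rw [hF3 f0 hf0]; omega)
    haveI : Nonempty (V × V × V) := ⟨(v0, v0, v0)⟩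
    have hex : ∀ f : Finset V, ∃ t : V × V × V, f ∈ F →
        (({t.1, t.2.1, t.2.2} : Finset V) = f ∧ ((c t.2.1 = c t.1 + 1) ↔ fc f = true)) := by
      intro f
      by_cases hf : f ∈ F
      · obtain ⟨x, y, z, hxy, hxz, hyz, rfl⟩ := Finset.card_eq_three.1 (hF3 f hf)
        have hx : x ∈ ({x, y, z} : Finset V) := by simp
        have hy : y ∈ ({x, y, z} : Finset V) := by simp
        have hz : z ∈ ({x, y, z} : Finset V) := by simp
        have c12 : c x ≠ c y := FiskProof.color_ne hc hf hx hy hxy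
        have c13 : c x ≠ c z := FiskProof.color_ne hc hf hx hz hxz
        have c23 : c y ≠ c z := FiskProof.color_ne hc hf hy hz hyz
        have hthird := FiskProof.fin3_third (c x) (c y) (c z) c12 c13 c23
        by_cases hb : (c y = c x + 1) ↔ (fc {x, y, z} = true)
        · exact ⟨(x, y, z), fun _ => ⟨rfl, hb⟩⟩
        · refine ⟨(x, z, y), fun _ => ⟨?_, ?_⟩⟩
          · ext w; simp; tauto
          · simp only
            rw [hthird]
            tauto
      · exact ⟨Classical.arbitrary _, fun h => absurd h hf⟩
    choose o ho using hex
    refine ⟨o, fun f hf => (ho f hf).1, ?_⟩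
    rintro f hf g hg hfg ⟨a, b⟩ hpf hpg
    obtain ⟨hset_f, hiff_f⟩ := ho f hf
    obtain ⟨hset_g, hiff_g⟩ := ho g hg
    have hd_f := FiskProof.triple_distinct (show ({(o f).1, (o f).2.1, (o f).2.2} : Finset V).card = 3 by rw [hset_f]; exact hF3 f hf)
    have hd_g := FiskProof.triple_distinct (show ({(o g).1, (o g).2.1, (o g).2.2} : Finset V).card = 3 by rw [hset_g]; exact hF3 g hg)
    have hmem_f := FiskProof.oE_mem hpf
    have hmem_g := FiskProof.oE_mem hpg
    rw [hset_f] at hmem_f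
    rw [hset_g] at hmem_g
    have hab : a ≠ b := FiskProof.oE_ne hpf hd_f.1 hd_f.2.1 hd_f.2.2
    have haif : a ∈ f ∩ g := Finset.mem_inter.2 ⟨hmem_f.1, hmem_g.1⟩
    have hbif : b ∈ f ∩ g := Finset.mem_inter.2 ⟨hmem_f.2, hmem_g.2⟩
    have hcard := FiskProof.inter_card_two (hF3 f hf) (hF3 g hg) hfg haif hbif hab
    have hne := hfc f hf g hg hfg hcard
    -- colors distinct on the triples
    have mf1 : (o f).1 ∈ f := by
      have h : (o f).1 ∈ ({(o f).1, (o f).2.1, (o f).2.2} : Finset V) := by simp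
      rw [hset_f] at h; exact h
    have mf2 : (o f).2.1 ∈ f := by
      have h : (o f).2.1 ∈ ({(o f).1, (o f).2.1, (o f).2.2} : Finset V) := by simp
      rw [hset_f] at h; exact h
    have mf3 : (o f).2.2 ∈ f := by
      have h : (o f).2.2 ∈ ({(o f).1, (o f).2.1, (o f).2.2} : Finset V) := by simp
      rw [hset_f] at h; exact h
    have mg1 : (o g).1 ∈ g := by
      have h : (o g).1 ∈ ({(o g).1, (o g).2.1, (o g).2.2} : Finset V) := by simp
      rw [hset_g] at h; exact h
    have mg2 : (o g).2.1 ∈ g := by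
      have h : (o g).2.1 ∈ ({(o g).1, (o g).2.1, (o g).2.2} : Finset V) := by simp
      rw [hset_g] at h; exact h
    have mg3 : (o g).2.2 ∈ g := by
      have h : (o g).2.2 ∈ ({(o g).1, (o g).2.1, (o g).2.2} : Finset V) := by simp
      rw [hset_g] at h; exact h
    have hcf := FiskProof.coherent (c := c)
      (FiskProof.color_ne hc hf mf1 mf2 hd_f.1)
      (FiskProof.color_ne hc hf mf1 mf3 hd_f.2.1)
      (FiskProof.color_ne hc hf mf2 mf3 hd_f.2.2) hpf
    have hcg := FiskProof.coherent (c := c)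
      (FiskProof.color_ne hc hg mg1 mg2 hd_g.1)
      (FiskProof.color_ne hc hg mg1 mg3 hd_g.2.1)
      (FiskProof.color_ne hc hg mg2 mg3 hd_g.2.2) hpg
    have : fc f = true ↔ fc g = true := by
      rw [← hiff_f, ← hiff_g, ← hcf, ← hcg]
    exact hne (by cases hF : fc f <;> cases hG : fc g <;> simp_all)
  · rintro ⟨o, ho1, ho2⟩
    refine ⟨fun f => decide (c (o f).2.1 = c (o f).1 + 1), ?_⟩
    intro f hf g hg hfg hcard
    obtain ⟨a, b, hab, habs⟩ := Finset.card_eq_two.1 hcard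
    have haf : a ∈ f ∧ a ∈ g := by
      have : a ∈ f ∩ g := habs ▸ Finset.mem_insert_self a {b}
      exact Finset.mem_inter.1 this
    have hbf : b ∈ f ∧ b ∈ g := by
      have : b ∈ f ∩ g := habs ▸ (by simp)
      exact Finset.mem_inter.1 this
    have hset_f := ho1 f hf
    have hset_g := ho1 g hg
    have hd_f := FiskProof.triple_distinct (show ({(o f).1, (o f).2.1, (o f).2.2} : Finset V).card = 3 by rw [hset_f]; exact hF3 f hf)
    have hd_g := FiskProof.triple_distinct (show ({(o g).1, (o g).2.1, (o g).2.2} : Finset V).card = 3 by rw [hset_g]; exact hF3 g hg)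
    have mf1 : (o f).1 ∈ f := by
      have h : (o f).1 ∈ ({(o f).1, (o f).2.1, (o f).2.2} : Finset V) := by simp
      rw [hset_f] at h; exact h
    have mf2 : (o f).2.1 ∈ f := by
      have h : (o f).2.1 ∈ ({(o f).1, (o f).2.1, (o f).2.2} : Finset V) := by simp
      rw [hset_f] at h; exact h
    have mf3 : (o f).2.2 ∈ f := by
      have h : (o f).2.2 ∈ ({(o f).1, (o f).2.1, (o f).2.2} : Finset V) := by simp
      rw [hset_f] at h; exact h
    have mg1 : (o g).1 ∈ g := by
      have h : (o g).1 ∈ ({(o g).1, (o g).2.1, (o g).2.2} : Finset V) := by simp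
      rw [hset_g] at h; exact h
    have mg2 : (o g).2.1 ∈ g := by
      have h : (o g).2.1 ∈ ({(o g).1, (o g).2.1, (o g).2.2} : Finset V) := by simp
      rw [hset_g] at h; exact h
    have mg3 : (o g).2.2 ∈ g := by
      have h : (o g).2.2 ∈ ({(o g).1, (o g).2.1, (o g).2.2} : Finset V) := by simp
      rw [hset_g] at h; exact h
    have cf12 := FiskProof.color_ne hc hf mf1 mf2 hd_f.1
    have cf13 := FiskProof.color_ne hc hf mf1 mf3 hd_f.2.1
    have cf23 := FiskProof.color_ne hc hf mf2 mf3 hd_f.2.2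
    have cg12 := FiskProof.color_ne hc hg mg1 mg2 hd_g.1
    have cg13 := FiskProof.color_ne hc hg mg1 mg3 hd_g.2.1
    have cg23 := FiskProof.color_ne hc hg mg2 mg3 hd_g.2.2
    have hmaf : a ∈ ({(o f).1, (o f).2.1, (o f).2.2} : Finset V) := by rw [hset_f]; exact haf.1
    have hmbf : b ∈ ({(o f).1, (o f).2.1, (o f).2.2} : Finset V) := by rw [hset_f]; exact hbf.1
    have hmag : a ∈ ({(o g).1, (o g).2.1, (o g).2.2} : Finset V) := by rw [hset_g]; exact haf.2
    have hmbg : b ∈ ({(o g).1, (o g).2.1, (o g).2.2} : Finset V) := by rw [hset_g]; exact hbf.2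
    have hpf := FiskProof.pair_in_oE hmaf hmbf hab
    have hpg := FiskProof.pair_in_oE hmag hmbg hab
    have hcab : c a ≠ c b := FiskProof.color_ne hc hf haf.1 hbf.1 hab
    have hopp := FiskProof.fin3_opp (c a) (c b) hcab
    simp only [ne_eq, decide_eq_decide]
    intro hPQ
    rcases hpf with hpf | hpf <;> rcases hpg with hpg | hpg
    · exact ho2 f hf g hg hfg (a, b) hpf hpg
    · have hA := FiskProof.coherent (c := c) cf12 cf13 cf23 hpf
      have hB := FiskProof.coherent (c := c) cg12 cg13 cg23 hpg
      rw [← hA, ← hB] at hPQ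
      rw [hopp] at hPQ
      tauto
    · have hA := FiskProof.coherent (c := c) cf12 cf13 cf23 hpf
      have hB := FiskProof.coherent (c := c) cg12 cg13 cg23 hpg
      rw [← hA, ← hB] at hPQ
      have hopp2 := FiskProof.fin3_opp (c b) (c a) hcab.symm
      rw [hopp2] at hPQ
      tauto
    · exact ho2 f hf g hg hfg (b, a) hpf hpg
end
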